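/- arXiv:0804.2576 — 4 statements merged into one kernel-verified Lean document; each statement's English description precedes it below -/
import Mathlib

section
/- For any graph G with an edge {u,v}, local complementation satisfies G*u*v*u = G*v*u*v, i.e., the two triple local complementation sequences along the edge {u,v} yield the same graph. -/
/-- Local complementation at a vertex `v`: toggle all edges between
distinct neighbours of `v`. -/
def localComp {V : Type} (G : SimpleGraph V) (v : V) : SimpleGraph V where
  Adj x y := x ≠ y ∧ Xor' (G.Adj x y) (G.Adj v x ∧ G.Adj v y)
  symm := by
    constructor
    intro x y ⟨hxy, h⟩
    refine ⟨hxy.symm, ?_⟩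
    rw [G.adj_comm y x, and_comm]
    exact h
  loopless := ⟨fun x h => h.1 rfl⟩

/-- Edge local complementation on the edge `{u,v}`: `G*u*v*u`. -/
def elc {V : Type} (G : SimpleGraph V) (u v : V) : SimpleGraph V :=
  localComp (localComp (localComp G u) v) u

/-! Both triple local complementations along `uv` equal the pivot of `G` on `uv`: writing
`N[w]` for closed neighbourhoods, the pivot toggles a pair `xy` exactly when an odd number of
`x ∈ N[u] ∧ y ∈ N[v]` and `x ∈ N[v] ∧ y ∈ N[u]` hold. That rule is symmetric in `u` and `v`. -/

section LocalComp

variable {V : Type} (G : SimpleGraph V)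

@[simp]
theorem localComp_adj {w x y : V} :
    (localComp G w).Adj x y ↔ x ≠ y ∧ Xor (G.Adj x y) (G.Adj w x ∧ G.Adj w y) :=
  Iff.rfl

theorem localComp_adj_self_left {w x : V} : (localComp G w).Adj w x ↔ G.Adj w x := by
  simp only [localComp_adj]
  grind [G.loopless.irrefl w, SimpleGraph.Adj.ne]

theorem localComp_adj_of_adj {w z x : V} (h : G.Adj w z) :
    (localComp G w).Adj z x ↔ z ≠ x ∧ Xor (G.Adj z x) (G.Adj w x) := by
  simp only [localComp_adj, h, true_and]

end LocalComp

section Pivot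

variable {V : Type*} (G : SimpleGraph V)

def pivot (u v : V) : SimpleGraph V where
  Adj x y := x ≠ y ∧ Xor (G.Adj x y)
    (Xor ((u = x ∨ G.Adj u x) ∧ (v = y ∨ G.Adj v y)) ((v = x ∨ G.Adj v x) ∧ (u = y ∨ G.Adj u y)))
  symm := ⟨fun x y ⟨hne, hxor⟩ => by
    refine ⟨hne.symm, ?_⟩
    rw [G.adj_comm, xor_comm ((u = y ∨ _) ∧ _)]
    simpa only [and_comm] using hxor⟩
  loopless := ⟨fun _ h => h.1 rfl⟩

@[simp]
theorem pivot_adj {u v x y : V} :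
    (pivot G u v).Adj x y ↔ x ≠ y ∧ Xor (G.Adj x y)
      (Xor ((u = x ∨ G.Adj u x) ∧ (v = y ∨ G.Adj v y)) ((v = x ∨ G.Adj v x) ∧ (u = y ∨ G.Adj u y))) :=
  Iff.rfl

theorem pivot_comm (u v : V) : pivot G u v = pivot G v u := by
  ext x y
  simp only [pivot_adj, xor_comm ((u = x ∨ _) ∧ _)]

end Pivot

theorem localComp_localComp_localComp_eq_pivot {V : Type} (G : SimpleGraph V) {u v : V}
    (h : G.Adj u v) : localComp (localComp (localComp G u) v) u = pivot G u v := by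
  have hvu : (localComp G u).Adj v u := ((localComp_adj_self_left G).2 h).symm
  ext x y
  simp only [localComp_adj_self_left, localComp_adj_of_adj _ hvu, localComp_adj_of_adj _ h,
    localComp_adj, pivot_adj]
  refine and_congr_right fun hxy => ?_
  by_cases hxu : x = u <;> by_cases hxv : x = v <;>
    grind [G.loopless.irrefl, SimpleGraph.Adj.symm]

/-- For any graph `G` with an edge `{u,v}`, the two triple local
complementation sequences along the edge agree: `G*u*v*u = G*v*u*v`. -/
theorem elc_triple_symm {V : Type} (G : SimpleGraph V) (u v : V) (h : G.Adj u v) :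
    localComp (localComp (localComp G u) v) u
      = localComp (localComp (localComp G v) u) v := by
  rw [localComp_localComp_localComp_eq_pivot G h, localComp_localComp_localComp_eq_pivot G h.symm,
    pivot_comm]
end

section
/- Bipartiteness is preserved by edge local complementation: if G is a bipartite simple graph with edge {u,v}, then G^{(uv)} = G*u*v*u is also bipartite. -/
/-!
If the edge `uv` lies in no triangle, then `G*u*v*u` is, after exchanging the labels `u` and `v`,
the graph `G` with all pairs between `N(u) \ {v}` and `N(v) \ {u}` toggled. In a bipartite graph
every edge lies in no triangle, and a toggled pair `x, y` is joined by the walk `x u v y` of odd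
length, so it always joins the two colour classes.
-/

open scoped symmDiff

namespace SimpleGraph

variable {V : Type} {G H : SimpleGraph V} {u v w x y : V}

lemma symmDiff_adj : (G ∆ H).Adj x y ↔ Xor (G.Adj x y) (H.Adj x y) := by
  simp [symmDiff_def, Xor]

lemma localComp_adj :
    (localComp G w).Adj x y ↔ x ≠ y ∧ Xor (G.Adj x y) (G.Adj w x ∧ G.Adj w y) := Iff.rfl

lemma localComp_adj_self : (localComp G w).Adj w x ↔ G.Adj w x := by
  simp only [localComp_adj, Xor, G.irrefl, false_and, or_false, not_false_eq_true, and_true,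
    and_iff_right_iff_imp]
  exact Adj.ne

lemma localComp_adj_of_adj (huv : G.Adj u v) (hfree : ∀ w, G.Adj u w → ¬G.Adj v w) :
    (localComp G u).Adj v x ↔ x ≠ v ∧ (G.Adj u x ∨ G.Adj v x) := by
  have := hfree x
  simp only [localComp_adj, Xor, huv, true_and, ne_comm (a := v)]
  tauto

lemma localComp_localComp_adj_self (huv : G.Adj u v) (hfree : ∀ w, G.Adj u w → ¬G.Adj v w) :
    (localComp (localComp G u) v).Adj u x ↔ x = v ∨ x ≠ u ∧ G.Adj v x := by
  have := hfree x
  have hvu := huv.symm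
  rw [localComp_adj]
  simp only [localComp_adj_self, localComp_adj_of_adj huv hfree, Xor, G.irrefl, hvu]
  grind

lemma elc_adj_left (huv : G.Adj u v) (hfree : ∀ w, G.Adj u w → ¬G.Adj v w) :
    (elc G u v).Adj u x ↔ x = v ∨ x ≠ u ∧ G.Adj v x := by
  rw [elc, localComp_adj_self, localComp_localComp_adj_self huv hfree]

lemma elc_adj_right (huv : G.Adj u v) (hfree : ∀ w, G.Adj u w → ¬G.Adj v w) :
    (elc G u v).Adj v x ↔ x = u ∨ x ≠ v ∧ G.Adj u x := by
  have := hfree x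
  have hvu := huv.symm
  rw [elc, localComp_adj]
  simp only [localComp_adj_self, localComp_adj_of_adj huv hfree,
    localComp_localComp_adj_self huv hfree, Xor]
  grind

lemma elc_adj_of_ne (huv : G.Adj u v) (hfree : ∀ w, G.Adj u w → ¬G.Adj v w)
    (hxu : x ≠ u) (hxv : x ≠ v) (hyu : y ≠ u) (hyv : y ≠ v) :
    (elc G u v).Adj x y ↔
      x ≠ y ∧ Xor (G.Adj x y) (G.Adj u x ∧ G.Adj v y ∨ G.Adj v x ∧ G.Adj u y) := by
  have := hfree x
  have := hfree y
  rw [elc, localComp_adj, localComp_localComp_adj_self huv hfree,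
    localComp_localComp_adj_self huv hfree, localComp_adj]
  simp only [localComp_adj_of_adj huv hfree, localComp_adj, Xor]
  grind

def pivotEdges (G : SimpleGraph V) (u v : V) : SimpleGraph V :=
  fromRel fun x y ↦ G.Adj u x ∧ x ≠ v ∧ G.Adj v y ∧ y ≠ u

theorem elc_comap_swap [DecidableEq V] (huv : G.Adj u v)
    (hfree : ∀ w, G.Adj u w → ¬G.Adj v w) :
    (elc G u v).comap (Equiv.swap u v) = G ∆ pivotEdges G u v := by
  ext x y
  simp only [comap_adj, symmDiff_adj, pivotEdges, fromRel_adj]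
  rcases eq_or_ne x u with rfl | hxu
  · rw [Equiv.swap_apply_left, elc_adj_right huv hfree]
    grind [adj_comm]
  rcases eq_or_ne x v with rfl | hxv
  · rw [Equiv.swap_apply_right, elc_adj_left huv hfree]
    grind [adj_comm]
  rw [Equiv.swap_apply_of_ne_of_ne hxu hxv]
  rcases eq_or_ne y u with rfl | hyu
  · rw [Equiv.swap_apply_left, adj_comm, elc_adj_right huv hfree]
    grind [adj_comm]
  rcases eq_or_ne y v with rfl | hyv
  · rw [Equiv.swap_apply_right, adj_comm, elc_adj_left huv hfree]
    grind [adj_comm]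
  rw [Equiv.swap_apply_of_ne_of_ne hyu hyv, elc_adj_of_ne huv hfree hxu hxv hyu hyv]
  grind [adj_comm, SimpleGraph.irrefl]

lemma Coloring.ne_of_adj_of_adj_of_adj (c : G.Coloring Bool) (hxu : G.Adj x u) (huv : G.Adj u v)
    (hvy : G.Adj v y) : c x ≠ c y := by
  have hodd := (c.odd_length_iff_not_congr (.cons hxu (.cons huv (.cons hvy .nil)))).1
    (by simp [Nat.odd_iff])
  exact fun hxy ↦ by simp [hxy] at hodd

def Coloring.sup {α : Type*} (c : G.Coloring α) (hH : ∀ ⦃x y⦄, H.Adj x y → c x ≠ c y) :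
    (G ⊔ H).Coloring α :=
  Coloring.mk c fun h ↦ h.elim c.valid (hH ·)

theorem Colorable.symmDiff_pivotEdges (hG : G.Colorable 2) (huv : G.Adj u v) :
    (G ∆ pivotEdges G u v).Colorable 2 := by
  let c : G.Coloring Bool := hG.toColoring (by simp)
  have hpivot : ∀ ⦃x y⦄, (pivotEdges G u v).Adj x y → c x ≠ c y := by
    rintro x y ⟨-, ⟨hux, -, hvy, -⟩ | ⟨huy, -, hvx, -⟩⟩
    · exact c.ne_of_adj_of_adj_of_adj hux.symm huv hvy
    · exact (c.ne_of_adj_of_adj_of_adj huy.symm huv hvx).symm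
  exact Colorable.mono_left symmDiff_le_sup (by simpa using (c.sup hpivot).colorable)

end SimpleGraph

/-- Bipartiteness is preserved by edge local complementation: if `G` is
bipartite (2-colorable) and `{u,v}` is an edge, then `G^{(uv)} = G*u*v*u`
is bipartite. -/
theorem elc_preserves_bipartite {V : Type} (G : SimpleGraph V) (u v : V)
    (h : G.Adj u v) (hbip : G.Colorable 2) :
    (elc G u v).Colorable 2 := by
  classical
  have hfree : ∀ w, G.Adj u w → ¬G.Adj v w := fun w huw hvw ↦
    hbip.cliqueFree (by norm_num) {u, v, w} (SimpleGraph.is3Clique_triple_iff.2 ⟨h, huw, hvw⟩)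
  have hswap : ((elc G u v).comap (Equiv.swap u v)).Colorable 2 := by
    rw [SimpleGraph.elc_comap_swap h hfree]
    exact hbip.symmDiff_pivotEdges h
  exact hswap.of_hom (SimpleGraph.Iso.comap (Equiv.swap u v) (elc G u v)).symm.toHom
end

section
/- For any finite simple graph G on n vertices, q(G,2) = 2^n, where q is the interlace polynomial. -/
/-- Deletion of a vertex `u`: the induced subgraph on the other vertices. -/
def delVert {V : Type} (G : SimpleGraph V) (u : V) :
    SimpleGraph {w : V // w ≠ u} :=
  G.induce {w : V | w ≠ u}

/-! Evaluating the recursion at `x = 2`, both graphs on the right-hand side have one vertex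
fewer, so by induction on the number of vertices each contributes `2 ^ (n - 1)`; a graph
without edges is `⊥` and gives `2 ^ n` directly. -/

open Polynomial

theorem Fintype.card_subtype_ne {W : Type} [Fintype W] [DecidableEq W] (u : W) :
    Fintype.card {w : W // w ≠ u} = Fintype.card W - 1 :=
  Set.card_ne_eq u

/-- For any graph `G` on `n` vertices, `q(G,2) = 2^n`, where `q` is the
interlace polynomial, i.e. any function on finite graphs satisfying
`q(E_n) = x^n` and `q(G) = q(G\u) + q(G^{(uv)}\u)` for every edge `{u,v}`. -/
theorem interlace_q_eval_two
    (q : ∀ (W : Type) [Fintype W] [DecidableEq W], SimpleGraph W → Polynomial ℤ)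
    (hbase : ∀ (W : Type) [Fintype W] [DecidableEq W],
      q W (⊥ : SimpleGraph W) = Polynomial.X ^ (Fintype.card W))
    (hrec : ∀ (W : Type) [Fintype W] [DecidableEq W] (G : SimpleGraph W)
      (u v : W), G.Adj u v →
      q W G = q {w : W // w ≠ u} (delVert G u) + q {w : W // w ≠ u} (delVert (elc G u v) u))
    {V : Type} [Fintype V] [DecidableEq V] (G : SimpleGraph V) :
    (q V G).eval 2 = 2 ^ (Fintype.card V) := by
  have hbot : ∀ (W : Type) [Fintype W] [DecidableEq W], (q W ⊥).eval 2 = 2 ^ Fintype.card W := by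
    intro W _ _
    rw [hbase, eval_pow, eval_X]
  suffices h : ∀ (n : ℕ) (W : Type) [Fintype W] [DecidableEq W] (G : SimpleGraph W),
      Fintype.card W = n → (q W G).eval 2 = 2 ^ n from h _ V G rfl
  intro n
  induction n with
  | zero =>
    intro W _ _ G hcard
    have : IsEmpty W := Fintype.card_eq_zero_iff.mp hcard
    rw [Subsingleton.elim G ⊥, hbot, hcard]
  | succ n ih =>
    intro W _ _ G hcard
    by_cases hG : G = ⊥
    · rw [hG, hbot, hcard]
    obtain ⟨u, v, huv⟩ : ∃ u v, G.Adj u v := by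
      simpa [SimpleGraph.eq_bot_iff_forall_not_adj] using hG
    have hcard' : Fintype.card {w : W // w ≠ u} = n := by
      rw [Fintype.card_subtype_ne, hcard, Nat.add_sub_cancel]
    rw [hrec W G u v huv, eval_add, ih _ _ hcard', ih _ _ hcard', pow_succ, mul_two]
end

section
/- Non-unimodality is preserved under the vertex-duplication transformation of coefficient sequences: suppose q(G,x) = a(x) + c·x^j + x^{j+1}·b(x) with j = deg(a)+1, and q(G\v,x) = a(x) + x^j·b(x); then q(G',x) = (1+x)q(G,x) − x·q(G\v,x) has coefficient sequence equal to that of q(G) with the coefficient c repeated once, so q(G') is unimodal if and only if q(G) is unimodal. -/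
open Polynomial

/-!
Write `q(G) = a + x^j r` with `r = c + x b`, so that `r(0) = c`; then
`q(G') = a + x^j (c + x r)`. Hence the coefficients of `q(G')` are those of `q(G)` read
through `dupIndex j : i ↦ if i ≤ j then i else i - 1`. This reindexing is monotone and onto,
and both its lowest section `i ↦ if i ≤ j then i else i + 1` and its highest section
`i ↦ if i < j then i else i + 1` are monotone; so the lowest preimage of a peak of `q(G)` is a
peak of `q(G')`, and the image of a peak of `q(G')` is a peak of `q(G)`, the slopes on either
side being pulled back along the two sections. The degree goes up by exactly one, unless
`q(G)` has no coefficient from `j` on, and then `q(G') = q(G)`.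
-/

/-- The coefficient sequence of a polynomial is unimodal: it is
non-decreasing up to some index `k`, and non-increasing from `k` on
(up to the degree). -/
def UnimodalCoeffs (p : Polynomial ℤ) : Prop :=
  ∃ k, (∀ i j : ℕ, i ≤ j → j ≤ k → p.coeff i ≤ p.coeff j) ∧
    (∀ i j : ℕ, k ≤ i → i ≤ j → j ≤ p.natDegree → p.coeff j ≤ p.coeff i)

def UnimodalOn {α : Type*} [Preorder α] (f : ℕ → α) (N : ℕ) : Prop :=
  ∃ k, (∀ i j : ℕ, i ≤ j → j ≤ k → f i ≤ f j) ∧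
    (∀ i j : ℕ, k ≤ i → i ≤ j → j ≤ N → f j ≤ f i)

def dupIndex (j i : ℕ) : ℕ := if i ≤ j then i else i - 1

section UnimodalOn

variable {α : Type*} [Preorder α] {f : ℕ → α} {j N : ℕ}

theorem UnimodalOn.comp_dupIndex (hjN : j ≤ N) (h : UnimodalOn f N) :
    UnimodalOn (f ∘ dupIndex j) (N + 1) := by
  obtain ⟨k, hinc, hdec⟩ := h
  refine ⟨if k ≤ j then k else k + 1, fun i m him hmk => hinc _ _ ?_ ?_,
    fun i m hki him hmN => hdec _ _ ?_ ?_ ?_⟩ <;>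
    simp only [dupIndex] at * <;> split_ifs at * <;> omega

theorem UnimodalOn.of_comp_dupIndex (h : UnimodalOn (f ∘ dupIndex j) (N + 1)) :
    UnimodalOn f N := by
  obtain ⟨k, hinc, hdec⟩ := h
  have lowest (i : ℕ) : f i = f (dupIndex j (if i ≤ j then i else i + 1)) := by
    unfold dupIndex; split_ifs <;> first | rfl | omega
  have highest (i : ℕ) : f i = f (dupIndex j (if i < j then i else i + 1)) := by
    unfold dupIndex; split_ifs <;> first | rfl | (congr 1; omega)
  refine ⟨dupIndex j k, fun i m him hmk => ?_, fun i m hki him hmN => ?_⟩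
  · rw [lowest i, lowest m]
    exact hinc _ _ (by split_ifs <;> omega) (by unfold dupIndex at hmk; split_ifs at * <;> omega)
  · rw [highest i, highest m]
    exact hdec _ _ (by unfold dupIndex at hki; split_ifs at * <;> omega)
      (by split_ifs <;> omega) (by split_ifs <;> omega)

theorem unimodalOn_comp_dupIndex_iff (hjN : j ≤ N) :
    UnimodalOn (f ∘ dupIndex j) (N + 1) ↔ UnimodalOn f N :=
  ⟨UnimodalOn.of_comp_dupIndex, UnimodalOn.comp_dupIndex hjN⟩

end UnimodalOn

theorem unimodalCoeffs_iff_of_coeff_eq_comp_dupIndex {p q : ℤ[X]} {j : ℕ}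
    (h : ∀ i, q.coeff i = p.coeff (dupIndex j i)) : UnimodalCoeffs q ↔ UnimodalCoeffs p := by
  rcases lt_or_ge p.degree j with hdeg | hdeg
  · have hq : q = p := by
      ext i
      rw [h, dupIndex]
      split_ifs with hij
      · rfl
      · rw [(degree_lt_iff_coeff_zero p j).1 hdeg i (by omega),
          (degree_lt_iff_coeff_zero p j).1 hdeg (i - 1) (by omega)]
    rw [hq]
  · have hjN := le_natDegree_of_coe_le_degree hdeg
    have hqdeg : q.natDegree = p.natDegree + 1 := by
      refine natDegree_eq_of_le_of_coeff_ne_zero ?_ ?_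
      · refine natDegree_le_iff_coeff_eq_zero.2 fun m hm => ?_
        rw [h, dupIndex, if_neg (by omega)]
        exact coeff_eq_zero_of_natDegree_lt (by omega)
      · rw [h, dupIndex, if_neg (by omega), Nat.add_sub_cancel]
        exact leadingCoeff_ne_zero.2 (ne_zero_of_coe_le_degree hdeg)
    have hqcoeff : q.coeff = p.coeff ∘ dupIndex j := funext h
    change UnimodalOn q.coeff q.natDegree ↔ UnimodalOn p.coeff p.natDegree
    rw [hqcoeff, hqdeg]
    exact unimodalOn_comp_dupIndex_iff hjN

theorem coeff_add_X_pow_mul {R : Type*} [Semiring R] {a : R[X]} {j : ℕ} (ha : a.natDegree < j)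
    (r : R[X]) (i : ℕ) : (a + X ^ j * r).coeff i = if i < j then a.coeff i else r.coeff (i - j) := by
  rw [coeff_add, coeff_X_pow_mul']
  rcases lt_or_ge i j with hij | hij
  · rw [if_neg (by omega), if_pos hij, add_zero]
  · rw [if_pos hij, if_neg (by omega), coeff_eq_zero_of_natDegree_lt (by omega), zero_add]

theorem coeff_add_X_pow_mul_C_coeff_zero_add_X_mul {R : Type*} [Semiring R] {a : R[X]} {j : ℕ}
    (ha : a.natDegree < j) (r : R[X]) (i : ℕ) :
    (a + X ^ j * (C (r.coeff 0) + X * r)).coeff i = (a + X ^ j * r).coeff (dupIndex j i) := by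
  rw [coeff_add_X_pow_mul ha, coeff_add_X_pow_mul ha, dupIndex]
  rcases lt_trichotomy i j with hij | rfl | hij
  · rw [if_pos hij, if_pos hij.le, if_pos hij]
  · simp
  · obtain ⟨n, rfl⟩ := Nat.exists_eq_add_of_lt hij
    rw [if_neg (show ¬j + n + 1 < j by omega), if_neg (show ¬j + n + 1 ≤ j by omega),
      if_neg (show ¬j + n + 1 - 1 < j by omega), show j + n + 1 - j = n + 1 by omega,
      show j + n + 1 - 1 - j = n by omega, coeff_add, coeff_C_succ, coeff_X_mul, zero_add]

/-- Non-unimodality is preserved by vertex duplication: if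
`q(G) = a + c·x^j + x^{j+1}·b` with `j = deg(a)+1` and
`q(G\v) = a + x^j·b`, then `q(G') = (1+x)q(G) − x·q(G\v)` has the same
coefficient sequence as `q(G)` but with the coefficient `c` repeated once,
and hence `q(G')` is unimodal if and only if `q(G)` is unimodal. -/
theorem dup_preserves_unimodality (a b : Polynomial ℤ) (c : ℤ) (j : ℕ)
    (hj : j = a.natDegree + 1)
    (qG qGdel qG' : Polynomial ℤ)
    (hqG : qG = a + C c * X ^ j + X ^ (j + 1) * b)
    (hqGdel : qGdel = a + X ^ j * b)
    (hqG' : qG' = (1 + X) * qG - X * qGdel) :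
    (∀ i : ℕ, qG'.coeff i = if i ≤ j then qG.coeff i else qG.coeff (i - 1)) ∧
      (UnimodalCoeffs qG' ↔ UnimodalCoeffs qG) := by
  set r := C c + X * b
  have hr : r.coeff 0 = c := by simp [r]
  have hqG_eq : qG = a + X ^ j * r := by rw [hqG]; ring
  have hqG'_eq : qG' = a + X ^ j * (C (r.coeff 0) + X * r) := by
    rw [hqG', hqG, hqGdel, hr]; ring
  have hcoeff (i : ℕ) : qG'.coeff i = qG.coeff (dupIndex j i) := by
    rw [hqG'_eq, hqG_eq]
    exact coeff_add_X_pow_mul_C_coeff_zero_add_X_mul (by omega) r i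
  exact ⟨fun i => by rw [hcoeff, dupIndex, apply_ite qG.coeff],
    unimodalCoeffs_iff_of_coeff_eq_comp_dupIndex hcoeff⟩
end
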